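/- The rational function F(t) = 1 - 5/[2] + 6/[2,2] + 3/[2,3] + 1/[2,5] - (1/[2,2,2] + 4/[2,2,3] + 2/[2,2,5] + 2/[2,3,4] + 1/[2,6,10]) + 1/[2,2,3,4] + 1/[2,2,3,5] + 1/[2,2,6,10] + 1/[2,3,4,5] + 1/[2,12,20,30], where all [·] are evaluated at t, satisfies F(t) = F(1/t) for all t ≠ 0 with [k](t) ≠ 0. -/
import Mathlib


open Finset in
noncomputable def geomQ (k : ℕ) (t : ℝ) : ℝ := ∑ i ∈ Finset.range k, t ^ i

/-- The reciprocal growth function of the Lannér simplex group `[5,3,3,3]`. -/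
noncomputable def FL (t : ℝ) : ℝ :=
  1 - 5 / geomQ 2 t + 6 / (geomQ 2 t * geomQ 2 t) + 3 / (geomQ 2 t * geomQ 3 t)
    + 1 / (geomQ 2 t * geomQ 5 t)
    - (1 / (geomQ 2 t * geomQ 2 t * geomQ 2 t)
        + 4 / (geomQ 2 t * geomQ 2 t * geomQ 3 t)
        + 2 / (geomQ 2 t * geomQ 2 t * geomQ 5 t)
        + 2 / (geomQ 2 t * geomQ 3 t * geomQ 4 t)
        + 1 / (geomQ 2 t * geomQ 6 t * geomQ 10 t))
    + 1 / (geomQ 2 t * geomQ 2 t * geomQ 3 t * geomQ 4 t)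
    + 1 / (geomQ 2 t * geomQ 2 t * geomQ 3 t * geomQ 5 t)
    + 1 / (geomQ 2 t * geomQ 2 t * geomQ 6 t * geomQ 10 t)
    + 1 / (geomQ 2 t * geomQ 3 t * geomQ 4 t * geomQ 5 t)
    + 1 / (geomQ 2 t * geomQ 12 t * geomQ 20 t * geomQ 30 t)

lemma geomQ_one_div (k : ℕ) (t : ℝ) (ht : t ≠ 0) :
    geomQ k (1 / t) = geomQ k t / t ^ (k - 1) := by
  rcases k with _ | k
  · simp [geomQ]
  unfold geomQ
  rw [eq_div_iff (pow_ne_zero _ ht), Finset.sum_mul, ← Finset.sum_range_reflect]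
  refine Finset.sum_congr rfl fun i hi => ?_
  rw [Finset.mem_range] at hi
  have hik : i ≤ k := Nat.lt_succ_iff.mp hi
  simp only [Nat.add_sub_cancel, one_div, inv_pow]
  rw [inv_mul_eq_div, div_eq_iff (pow_ne_zero _ ht), ← pow_add]
  congr 1
  omega

set_option maxHeartbeats 4000000 in
theorem stmt_12 (t : ℝ) (ht : t ≠ 0)
    (hQ : ∀ k ∈ ({2, 3, 4, 5, 6, 10, 12, 20, 30} : Finset ℕ), geomQ k t ≠ 0) :
    FL t = FL (1 / t) := by
  have h2 := hQ 2 (by simp)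
  have h3 := hQ 3 (by simp)
  have h4 := hQ 4 (by simp)
  have h5 := hQ 5 (by simp)
  have h6 := hQ 6 (by simp)
  have h10 := hQ 10 (by simp)
  have h12 := hQ 12 (by simp)
  have h20 := hQ 20 (by simp)
  have h30 := hQ 30 (by simp)
  unfold FL
  rw [geomQ_one_div 2 t ht, geomQ_one_div 3 t ht, geomQ_one_div 4 t ht,
    geomQ_one_div 5 t ht, geomQ_one_div 6 t ht, geomQ_one_div 10 t ht,
    geomQ_one_div 12 t ht, geomQ_one_div 20 t ht, geomQ_one_div 30 t ht]
  simp only [geomQ, Finset.sum_range_succ, Finset.sum_range_zero, pow_zero,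
    pow_one, zero_add] at h2 h3 h4 h5 h6 h10 h12 h20 h30 ⊢
  field_simp [h2, h3, h4, h5, h6, h10, h12, h20, h30]
  ring
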